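/- arXiv:1507.07236 — 13 statements merged into one kernel-verified Lean document; each statement's English description precedes it below -/
import Mathlib

section
/- For positive integers m ≤ n, the map h/k ↦ (k-h)/k is an order-reversing bijection from F_n^m := {h/k ∈ F_n : h ≤ m} onto G_n^{n-m} := {h/k ∈ F_n : (n-m)+k-n ≤ h}. -/
/-- The Farey sequence of order `n`, as the set of (automatically reduced)
rationals `h/k` with `0 ≤ h ≤ k ≤ n`. -/
def farey (n : ℕ) : Set ℚ := {q | 0 ≤ q ∧ q ≤ 1 ∧ q.den ≤ n}

/-- `F_n^m = {h/k ∈ F_n : h ≤ m}`. -/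
def fareyF (n m : ℕ) : Set ℚ := {q ∈ farey n | q.num ≤ (m : ℤ)}

/-- `G_n^m = {h/k ∈ F_n : m + k - n ≤ h}`. -/
def fareyG (n m : ℕ) : Set ℚ := {q ∈ farey n | (m : ℤ) + q.den - n ≤ q.num}

/-- `F(B(n),m) = {h/k ∈ F_n : m + k - n ≤ h ≤ m}`. -/
def fareyB (n m : ℕ) : Set ℚ :=
  {q ∈ farey n | (m : ℤ) + q.den - n ≤ q.num ∧ q.num ≤ (m : ℤ)}

/-
`q ↦ 1 - q` keeps the reduced denominator `k` and sends the numerator `h` to `k - h`, so it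
preserves `F_n` and turns `h ≤ m` into `(n - m) + k - n ≤ k - h`; being an involution, it is a
bijection `F_n^m → G_n^{n-m}`.
-/

theorem Rat.one_sub_den (q : ℚ) : (1 - q).den = q.den :=
  mod_cast Rat.natCast_sub_den 1 q

theorem Rat.one_sub_num (q : ℚ) : (1 - q).num = q.den - q.num := by
  have h := Rat.mul_den_eq_num (1 - q)
  rw [Rat.one_sub_den, sub_mul, one_mul, Rat.mul_den_eq_num] at h
  exact_mod_cast h.symm

theorem one_sub_mem_farey_iff {n : ℕ} {q : ℚ} : 1 - q ∈ farey n ↔ q ∈ farey n := by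
  simp only [farey, Set.mem_ofPred_eq, Rat.one_sub_den, sub_nonneg, tsub_le_iff_right,
    le_add_iff_nonneg_right]
  tauto

theorem one_sub_mem_fareyG_iff {m n : ℕ} (hmn : m ≤ n) {q : ℚ} :
    1 - q ∈ fareyG n (n - m) ↔ q ∈ fareyF n m := by
  simp only [fareyG, fareyF, Set.mem_ofPred_eq, one_sub_mem_farey_iff, Rat.one_sub_num,
    Rat.one_sub_den, Nat.cast_sub hmn]
  exact and_congr_right fun _ => by constructor <;> intro h <;> linarith

theorem bijOn_one_sub_fareyF_fareyG {m n : ℕ} (hmn : m ≤ n) :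
    Set.BijOn (fun q : ℚ => 1 - q) (fareyF n m) (fareyG n (n - m)) := by
  have hinv : Set.InvOn (fun q : ℚ => 1 - q) (fun q => 1 - q) (fareyF n m) (fareyG n (n - m)) :=
    ⟨fun q _ => sub_sub_cancel 1 q, fun q _ => sub_sub_cancel 1 q⟩
  refine hinv.bijOn (fun q hq => (one_sub_mem_fareyG_iff hmn).2 hq) fun q hq => ?_
  rw [← one_sub_mem_fareyG_iff hmn, sub_sub_cancel]
  exact hq

theorem stmt3_general (m n : ℕ) (hmn : m ≤ n) :
    Set.BijOn (fun q : ℚ => 1 - q) (fareyF n m) (fareyG n (n - m)) ∧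
    ∀ x ∈ fareyF n m, ∀ y ∈ fareyF n m, x < y → 1 - y < 1 - x :=
  ⟨bijOn_one_sub_fareyF_fareyG hmn, fun _ _ _ _ hxy => sub_lt_sub_left hxy 1⟩

/-- `h/k ↦ (k-h)/k` is an order-reversing bijection `F_n^m → G_n^{n-m}`. -/
theorem stmt3 (m n : ℕ) (hm : 0 < m) (hmn : m ≤ n) :
    Set.BijOn (fun q : ℚ => 1 - q) (fareyF n m) (fareyG n (n - m)) ∧
    ∀ x ∈ fareyF n m, ∀ y ∈ fareyF n m, x < y → 1 - y < 1 - x :=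
  stmt3_general m n hmn
end

section
/- For positive integers m ≤ n, the map h/k ↦ (k-h)/k is an order-reversing bijection from F(B(n),m) onto F(B(n),n-m), where F(B(n),m) := {h/k ∈ F_n : m+k-n ≤ h ≤ m}. -/
theorem one_sub_mapsTo_fareyB {n k : ℕ} (hk : k ≤ n) :
    Set.MapsTo (fun q : ℚ => 1 - q) (fareyB n k) (fareyB n (n - k)) := by
  rintro q ⟨⟨hq0, hq1, hden⟩, hlo, hhi⟩
  refine ⟨⟨by linarith, by linarith, by rwa [Rat.one_sub_den]⟩, ?_, ?_⟩
  · rw [Rat.one_sub_num, Rat.one_sub_den]; omega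
  · rw [Rat.one_sub_num]; omega

theorem stmt4_general (m n : ℕ) (hmn : m ≤ n) :
    Set.BijOn (fun q : ℚ => 1 - q) (fareyB n m) (fareyB n (n - m)) ∧
    ∀ x ∈ fareyB n m, ∀ y ∈ fareyB n m, x < y → 1 - y < 1 - x := by
  have hback : Set.MapsTo (fun q : ℚ => 1 - q) (fareyB n (n - m)) (fareyB n m) := by
    simpa only [Nat.sub_sub_self hmn] using one_sub_mapsTo_fareyB (Nat.sub_le n m)
  have hinv : Set.InvOn (fun q : ℚ => 1 - q) (fun q : ℚ => 1 - q)
      (fareyB n m) (fareyB n (n - m)) :=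
    ⟨fun q _ => sub_sub_cancel 1 q, fun q _ => sub_sub_cancel 1 q⟩
  exact ⟨hinv.bijOn (one_sub_mapsTo_fareyB hmn) hback, fun x _ y _ hxy => sub_lt_sub_left hxy 1⟩

/-- `h/k ↦ (k-h)/k` is an order-reversing bijection
`F(B(n),m) → F(B(n),n-m)`. -/
theorem stmt4 (m n : ℕ) (hm : 0 < m) (hmn : m ≤ n) :
    Set.BijOn (fun q : ℚ => 1 - q) (fareyB n m) (fareyB n (n - m)) ∧
    ∀ x ∈ fareyB n m, ∀ y ∈ fareyB n m, x < y → 1 - y < 1 - x :=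
  stmt4_general m n hmn
end

section
/- For positive integers ℓ ≤ m ≤ n with m < n, the subsequence F(B(n),m)^ℓ := {h/k ∈ F(B(n),m) : h ≤ ℓ} equals F(B(n-m+ℓ), ℓ), i.e., {h/k ∈ F_n : m+k-n ≤ h ≤ m and h ≤ ℓ} = {h/k ∈ F_{n-m+ℓ} : ℓ+k-(n-m+ℓ) ≤ h ≤ ℓ}. -/
/-! For `h ≤ ℓ`, the lower bound `m + k - n ≤ h` already forces `k ≤ n - m + ℓ ≤ n`, and it is
literally the lower bound `ℓ + k - (n - m + ℓ) ≤ h` of `F(B(n - m + ℓ), ℓ)`. -/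

theorem stmt5_general (ℓ m n : ℕ) (hlm : ℓ ≤ m) (hmn : m < n) :
    {q ∈ fareyB n m | q.num ≤ (ℓ : ℤ)} = fareyB (n - m + ℓ) ℓ := by
  have hcast : ((n - m + ℓ : ℕ) : ℤ) = n - m + ℓ := by omega
  ext q
  constructor
  · rintro ⟨⟨⟨hq0, hq1, hden⟩, hlow, -⟩, hnum⟩
    exact ⟨⟨hq0, hq1, by omega⟩, by omega, hnum⟩
  · rintro ⟨⟨hq0, hq1, hden⟩, hlow, hnum⟩
    exact ⟨⟨⟨hq0, hq1, by omega⟩, by omega, by omega⟩, hnum⟩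

theorem stmt5 (ℓ m n : ℕ) (hl : 0 < ℓ) (hlm : ℓ ≤ m) (hmn : m < n) :
    {q ∈ fareyB n m | q.num ≤ (ℓ : ℤ)} = fareyB (n - m + ℓ) ℓ :=
  stmt5_general ℓ m n hlm hmn
end

section
/- For positive integers m ≤ ℓ ≤ n-1, the subsequence G(B(n),m)^ℓ := {h/k ∈ F(B(n),m) : ℓ+k-n ≤ h} equals F(B(n+m-ℓ), m), i.e., {h/k ∈ F_n : m+k-n ≤ h ≤ m and ℓ+k-n ≤ h} = {h/k ∈ F_{n+m-ℓ} : m+k-(n+m-ℓ) ≤ h ≤ m}. -/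
theorem stmt6_general (ℓ m n : ℕ) (hml : m ≤ ℓ) :
    {q ∈ fareyB n m | (ℓ : ℤ) + q.den - n ≤ q.num} = fareyB (n + m - ℓ) m := by
  ext q
  -- `0 < q.den` settles the case `n + m ≤ ℓ`, where `n + m - ℓ` truncates to `0`.
  have hden := q.den_pos
  simp only [fareyB, farey, Set.mem_ofPred_eq]
  constructor
  · rintro ⟨⟨⟨h0, h1, hk⟩, hg, hf⟩, hl⟩
    exact ⟨⟨h0, h1, by omega⟩, by omega, hf⟩
  · rintro ⟨⟨h0, h1, hk⟩, hg, hf⟩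
    exact ⟨⟨⟨h0, h1, by omega⟩, by omega, hf⟩, by omega⟩

theorem stmt6 (ℓ m n : ℕ) (hm : 0 < m) (hml : m ≤ ℓ) (hln : ℓ ≤ n - 1) :
    {q ∈ fareyB n m | (ℓ : ℤ) + q.den - n ≤ q.num} = fareyB (n + m - ℓ) m :=
  stmt6_general ℓ m n hml
end

section
/- Let m, n, ℓ, λ be positive integers with ℓ ≤ m ≤ n and λ ≤ n-m. Then the intersection of {h/k ∈ F(B(n),m) : h ≤ ℓ} and {h/k ∈ F(B(n),m) : (n-λ)+k-n ≤ h} equals F(B(ℓ+λ), ℓ). -/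
/-! Since `F(B(n),m) = F_n^m ∩ G_n^m`, with `F_n^m` increasing and `G_n^m` decreasing in `m`, the
left-hand side is `F_n^ℓ ∩ G_n^{n-λ}`, which already lies in `F(B(n),m)`. Its conditions `h ≤ ℓ` and
`k - λ ≤ h` force `k ≤ ℓ + λ ≤ n`, so the order `n` can be lowered to `ℓ + λ`, giving `F(B(ℓ+λ),ℓ)`. -/

theorem fareyB_subset_farey (n m : ℕ) : fareyB n m ⊆ farey n := fun _ hq => hq.1

theorem fareyB_eq_fareyF_inter_fareyG (n m : ℕ) : fareyB n m = fareyF n m ∩ fareyG n m := by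
  ext q
  simp only [fareyB, fareyF, fareyG, Set.mem_inter_iff, Set.mem_ofPred_eq]
  tauto

theorem fareyF_mono {n ℓ m : ℕ} (h : ℓ ≤ m) : fareyF n ℓ ⊆ fareyF n m :=
  fun _ ⟨hq, hnum⟩ => ⟨hq, hnum.trans (by exact_mod_cast h)⟩

theorem fareyG_anti {n ℓ m : ℕ} (h : ℓ ≤ m) : fareyG n m ⊆ fareyG n ℓ :=
  fun _ ⟨hq, hnum⟩ => ⟨hq, le_trans (by gcongr) hnum⟩

theorem fareyF_inter_fareyG_sub_eq_fareyB {n ℓ lam : ℕ} (h : ℓ + lam ≤ n) :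
    fareyF n ℓ ∩ fareyG n (n - lam) = fareyB (ℓ + lam) ℓ := by
  ext q
  simp only [fareyF, fareyG, fareyB, farey, Set.mem_inter_iff, Set.mem_ofPred_eq]
  constructor
  · rintro ⟨⟨⟨h0, h1, -⟩, hnum⟩, -, hden⟩
    refine ⟨⟨h0, h1, ?_⟩, ?_, hnum⟩ <;> omega
  · rintro ⟨⟨h0, h1, hden⟩, hlow, hnum⟩
    refine ⟨⟨⟨h0, h1, ?_⟩, hnum⟩, ⟨h0, h1, ?_⟩, ?_⟩ <;> omega

theorem stmt7_general (ℓ lam m n : ℕ) (hlm : ℓ ≤ m) (hmn : m ≤ n)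
    (hlamnm : lam ≤ n - m) :
    {q ∈ fareyB n m | q.num ≤ (ℓ : ℤ)} ∩
      {q ∈ fareyB n m | ((n - lam : ℕ) : ℤ) + q.den - n ≤ q.num} =
    fareyB (ℓ + lam) ℓ := by
  have hB : fareyF n ℓ ∩ fareyG n (n - lam) ⊆ fareyB n m := by
    rw [fareyB_eq_fareyF_inter_fareyG]
    exact Set.inter_subset_inter (fareyF_mono hlm) (fareyG_anti (by omega))
  rw [Set.sep_eq_inter_sep (fareyB_subset_farey n m),
    Set.sep_eq_inter_sep (fareyB_subset_farey n m), ← Set.inter_inter_distrib_left]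
  change fareyB n m ∩ (fareyF n ℓ ∩ fareyG n (n - lam)) = _
  rw [Set.inter_eq_right.mpr hB, fareyF_inter_fareyG_sub_eq_fareyB (by omega)]

theorem stmt7 (ℓ lam m n : ℕ) (hl : 0 < ℓ) (hlm : ℓ ≤ m) (hmn : m ≤ n)
    (hlam : 0 < lam) (hlamnm : lam ≤ n - m) :
    {q ∈ fareyB n m | q.num ≤ (ℓ : ℤ)} ∩
      {q ∈ fareyB n m | ((n - lam : ℕ) : ℤ) + q.den - n ≤ q.num} =
    fareyB (ℓ + lam) ℓ :=
  stmt7_general ℓ lam m n hlm hmn hlamnm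
end

section
/- For every positive integer m, the map h/k ↦ h/(h+k) (given in vector form by left multiplication by the matrix [[1,0],[1,1]]) is an order-preserving bijection from the Farey sequence F_m onto the lower half F^{≤1/2}(B(2m),m) := {h/k ∈ F_{2m} : k-m ≤ h ≤ m, h/k ≤ 1/2} of F(B(2m),m). -/
/-!
On reduced fractions `h/k ↦ h/(h+k)` is the matrix `[[1,0],[1,1]]`, which preserves
coprimality, so the image of `h/k` is already in lowest terms. Hence `k ≤ m` becomes
`(h+k) - m ≤ h` and `h ≤ k` becomes both `h ≤ m` and `h/(h+k) ≤ 1/2`; the inverse map is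
`r ↦ r/(1-r)`. Order preservation holds because `x ↦ x/(1+x)` is strictly increasing
on `[0, ∞)`.
-/

section OrderedField

variable {K : Type*} [Field K] [LinearOrder K] [IsStrictOrderedRing K]

lemma strictMonoOn_div_one_add : StrictMonoOn (fun x : K => x / (1 + x)) (Set.Ici 0) := by
  intro x (hx : 0 ≤ x) y (hy : 0 ≤ y) hxy
  rw [div_lt_div_iff₀ (by linarith) (by linarith)]
  linarith

lemma div_one_add_le_half {x : K} (hx : 0 ≤ x) (hx1 : x ≤ 1) : x / (1 + x) ≤ 1 / 2 := by
  rw [div_le_div_iff₀ (by linarith) two_pos]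
  linarith

lemma div_one_sub_div_one_add_div_one_sub {r : K} (hr : r ≠ 1) :
    r / (1 - r) / (1 + r / (1 - r)) = r := by
  have : 1 - r ≠ 0 := sub_ne_zero.mpr hr.symm
  field_simp
  ring

end OrderedField

namespace Rat

lemma div_one_add_eq_num_div_num_add_den {q : ℚ} (hq : 0 ≤ q) :
    q / (1 + q) = (q.num : ℚ) / ((q.num + q.den : ℤ) : ℚ) := by
  have hden : (q.den : ℚ) * q = q.num := by
    rw [mul_comm]
    exact_mod_cast mul_den_eq_num q
  rw [div_eq_div_iff (by positivity) (by positivity)]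
  push_cast
  linear_combination hden

lemma coprime_num_num_add_den {q : ℚ} (hq : 0 ≤ q) :
    Nat.Coprime q.num.natAbs (q.num + q.den).natAbs := by
  rw [Int.natAbs_add_of_nonneg (num_nonneg.mpr hq) (Int.natCast_nonneg _), Int.natAbs_natCast,
    Nat.add_comm]
  exact Nat.coprime_add_self_right.mpr q.reduced

lemma num_div_one_add {q : ℚ} (hq : 0 ≤ q) : (q / (1 + q)).num = q.num := by
  rw [div_one_add_eq_num_div_num_add_den hq]
  exact num_div_eq_of_coprime (by have := num_nonneg.mpr hq; positivity)
    (coprime_num_num_add_den hq)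

lemma den_div_one_add {q : ℚ} (hq : 0 ≤ q) : ((q / (1 + q)).den : ℤ) = q.num + q.den := by
  rw [div_one_add_eq_num_div_num_add_den hq]
  exact den_div_eq_of_coprime (by have := num_nonneg.mpr hq; positivity)
    (coprime_num_num_add_den hq)

end Rat

lemma div_one_add_mem_fareyB {m : ℕ} {q : ℚ} (hq : q ∈ farey m) :
    q / (1 + q) ∈ fareyB (2 * m) m := by
  obtain ⟨hq0, hq1, hden⟩ := hq
  have hnum_le_den : q.num ≤ q.den := Rat.num_le_denom_iff.mpr hq1
  have hden_le : (q.den : ℤ) ≤ m := mod_cast hden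
  refine ⟨⟨by positivity, div_le_one_of_le₀ (by linarith) (by linarith), ?_⟩, ?_, ?_⟩
  · suffices ((q / (1 + q)).den : ℤ) ≤ 2 * m by exact_mod_cast this
    rw [Rat.den_div_one_add hq0]
    linarith
  · rw [Rat.num_div_one_add hq0, Rat.den_div_one_add hq0]
    push_cast
    linarith
  · rw [Rat.num_div_one_add hq0]
    linarith

lemma div_one_sub_mem_farey {m : ℕ} {r : ℚ} (hr : r ∈ fareyB (2 * m) m) (hr_half : r ≤ 1 / 2) :
    r / (1 - r) ∈ farey m := by
  obtain ⟨⟨hr0, -, -⟩, hlow, -⟩ := hr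
  have hr1 : r ≠ 1 := (hr_half.trans_lt (by norm_num)).ne
  have hsub : 0 < 1 - r := by linarith
  have hq0 : 0 ≤ r / (1 - r) := div_nonneg hr0 hsub.le
  have hnum := Rat.num_div_one_add hq0
  have hden := Rat.den_div_one_add hq0
  rw [div_one_sub_div_one_add_div_one_sub hr1] at hnum hden
  refine ⟨hq0, (div_le_one hsub).mpr (by linarith), ?_⟩
  suffices ((r / (1 - r)).den : ℤ) ≤ m by exact_mod_cast this
  push_cast at hlow
  linarith

theorem stmt8_general (m : ℕ) :
    Set.BijOn (fun q : ℚ => q / (1 + q)) (farey m)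
      {q ∈ fareyB (2 * m) m | q ≤ 1 / 2} ∧
    ∀ x ∈ farey m, ∀ y ∈ farey m, x < y → x / (1 + x) < y / (1 + y) := by
  have hsub : farey m ⊆ Set.Ici 0 := fun q hq => hq.1
  have hmono := strictMonoOn_div_one_add.mono hsub
  refine ⟨⟨fun q hq => ⟨div_one_add_mem_fareyB hq, div_one_add_le_half hq.1 hq.2.1⟩,
    hmono.injOn, ?_⟩, fun x hx y hy => hmono hx hy⟩
  rintro r ⟨hr, hr_half⟩
  exact ⟨r / (1 - r), div_one_sub_mem_farey hr hr_half,
    div_one_sub_div_one_add_div_one_sub (hr_half.trans_lt (by norm_num)).ne⟩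

/-- `h/k ↦ h/(h+k)`, i.e. `q ↦ q/(1+q)`, is an order-preserving bijection of
`F_m` onto the lower half of `F(B(2m),m)`. -/
theorem stmt8 (m : ℕ) (hm : 0 < m) :
    Set.BijOn (fun q : ℚ => q / (1 + q)) (farey m)
      {q ∈ fareyB (2 * m) m | q ≤ 1 / 2} ∧
    ∀ x ∈ farey m, ∀ y ∈ farey m, x < y → x / (1 + x) < y / (1 + y) :=
  stmt8_general m
end

section
/- For every positive integer m, the map h/k ↦ k/(2k-h) (given in vector form by the matrix [[0,1],[-1,2]]) is an order-preserving bijection from the Farey sequence F_m onto the upper half F^{≥1/2}(B(2m),m) := {h/k ∈ F_{2m} : k-m ≤ h ≤ m, h/k ≥ 1/2} of F(B(2m),m). -/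
/-! The map is `q ↦ 1 / (2 - q)`, strictly increasing on `q < 2`, with inverse `q ↦ 2 - 1 / q`.
On reduced fractions it sends `h/k` to `k/(2k - h)`, again in lowest terms because
`gcd(k, 2k - h) = gcd(k, h) = 1`; the inverse sends `h/k` to `(2h - k)/h`. So the condition
`k ≤ m` on `F_m` becomes the condition `h ≤ m` on the image, and the remaining constraints of
`F(B(2m), m)` follow from `0 ≤ h` and `k ≤ m`. -/

namespace Rat

theorem num_inv_of_pos {q : ℚ} (hq : 0 < q) : q⁻¹.num = q.den := by
  rw [num_inv, Int.sign_eq_one_of_pos (num_pos.mpr hq), one_mul]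

theorem den_inv_of_pos {q : ℚ} (hq : 0 < q) : (q⁻¹.den : ℤ) = q.num := by
  rw [den_inv_of_ne_zero hq.ne', Int.natAbs_of_nonneg (num_nonneg.mpr hq.le)]

theorem num_intCast_sub (n : ℤ) (q : ℚ) : (n - q).num = n * q.den - q.num := by
  have h := mul_den_eq_num (n - q)
  rw [intCast_sub_den, sub_mul, mul_den_eq_num] at h
  exact_mod_cast h.symm

end Rat

theorem num_one_div_two_sub {q : ℚ} (hq : q < 2) : (1 / (2 - q)).num = q.den := by
  rw [one_div, Rat.num_inv_of_pos (sub_pos.mpr hq), Rat.ofNat_sub_den]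

theorem den_one_div_two_sub {q : ℚ} (hq : q < 2) :
    ((1 / (2 - q)).den : ℤ) = 2 * q.den - q.num := by
  rw [one_div, Rat.den_inv_of_pos (sub_pos.mpr hq), ← Rat.num_intCast_sub 2 q, Int.cast_ofNat]

theorem den_two_sub_one_div {q : ℚ} (hq : 0 < q) : ((2 - 1 / q).den : ℤ) = q.num := by
  rw [Rat.ofNat_sub_den, one_div, Rat.den_inv_of_pos hq]

theorem strictMonoOn_one_div_two_sub : StrictMonoOn (fun q : ℚ => 1 / (2 - q)) (Set.Iio 2) :=
  fun _ _ _ hy hxy => one_div_lt_one_div_of_lt (sub_pos.mpr hy) (by linarith)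

theorem farey_subset_Iio_two (n : ℕ) : farey n ⊆ Set.Iio 2 :=
  fun _ hq => lt_of_le_of_lt hq.2.1 one_lt_two

theorem mapsTo_one_div_two_sub_farey (m : ℕ) :
    Set.MapsTo (fun q : ℚ => 1 / (2 - q)) (farey m) {q ∈ fareyB (2 * m) m | 1 / 2 ≤ q} := by
  rintro q ⟨hq0, hq1, hden⟩
  have hlt : q < 2 := by linarith
  have hnum0 : 0 ≤ q.num := Rat.num_nonneg.mpr hq0
  have hdenm : (q.den : ℤ) ≤ m := by exact_mod_cast hden
  have hpos : (0 : ℚ) < 2 - q := by linarith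
  refine ⟨⟨⟨by positivity, ?_, ?_⟩, ?_, ?_⟩, ?_⟩
  · rw [div_le_one hpos]; linarith
  · have h := den_one_div_two_sub hlt
    have : ((1 / (2 - q)).den : ℤ) ≤ ((2 * m : ℕ) : ℤ) := by push_cast; omega
    exact_mod_cast this
  · rw [num_one_div_two_sub hlt, den_one_div_two_sub hlt]; push_cast; omega
  · rw [num_one_div_two_sub hlt]; exact hdenm
  · rw [div_le_div_iff₀ two_pos hpos]; linarith

theorem surjOn_one_div_two_sub_farey (m : ℕ) :
    Set.SurjOn (fun q : ℚ => 1 / (2 - q)) (farey m) {q ∈ fareyB (2 * m) m | 1 / 2 ≤ q} := by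
  rintro q ⟨⟨⟨-, hq1, -⟩, -, hnum⟩, hhalf⟩
  have hq0 : 0 < q := by linarith
  refine ⟨2 - 1 / q, ⟨?_, ?_, ?_⟩, by simp⟩
  · have : 1 / q ≤ 2 := by rw [div_le_iff₀ hq0]; linarith
    linarith
  · have : 1 ≤ 1 / q := by rw [le_div_iff₀ hq0]; linarith
    linarith
  · have : ((2 - 1 / q).den : ℤ) ≤ m := by rw [den_two_sub_one_div hq0]; exact hnum
    exact_mod_cast this

theorem stmt9_general (m : ℕ) :
    Set.BijOn (fun q : ℚ => 1 / (2 - q)) (farey m)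
      {q ∈ fareyB (2 * m) m | 1 / 2 ≤ q} ∧
    ∀ x ∈ farey m, ∀ y ∈ farey m, x < y → 1 / (2 - x) < 1 / (2 - y) := by
  have hmono := strictMonoOn_one_div_two_sub.mono (farey_subset_Iio_two m)
  exact ⟨⟨mapsTo_one_div_two_sub_farey m, hmono.injOn, surjOn_one_div_two_sub_farey m⟩,
    fun x hx y hy hxy => hmono hx hy hxy⟩

/-- `h/k ↦ k/(2k-h)`, i.e. `q ↦ 1/(2-q)`, is an order-preserving bijection of
`F_m` onto the upper half of `F(B(2m),m)`. -/
theorem stmt9 (m : ℕ) (hm : 0 < m) :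
    Set.BijOn (fun q : ℚ => 1 / (2 - q)) (farey m)
      {q ∈ fareyB (2 * m) m | 1 / 2 ≤ q} ∧
    ∀ x ∈ farey m, ∀ y ∈ farey m, x < y → 1 / (2 - x) < 1 / (2 - y) :=
  stmt9_general m
end

section
/- For every positive integer m, the map h/k ↦ (k-h)/(2k-h) (matrix [[-1,1],[-1,2]]) is an order-reversing bijection from the Farey sequence F_m onto F^{≤1/2}(B(2m),m), the fractions of F(B(2m),m) that are at most 1/2. -/
/-!
The map `q ↦ (1 - q) / (2 - q)` is the Möbius transformation of the unimodular matrix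
`[[-1, 1], [-1, 2]]`, so it sends a reduced fraction `h/k` to the fraction `(k - h)/(2k - h)`,
which is again reduced. In these coordinates the Farey condition `k ≤ m` is exactly the lower
bound `m + (2k - h) - 2m ≤ k - h` defining `F(B(2m), m)`, and together with `0 ≤ h` it gives
the remaining bounds, the value lying in `[0, 1/2]`. The inverse `p ↦ (1 - 2p)/(1 - p)` is of
the same kind, which gives surjectivity, and `(1 - q)/(2 - q) = 1 - 1/(2 - q)` is strictly
decreasing.
-/
theorem IsCoprime.mul_add_mul_of_isUnit_det {R : Type*} [CommRing R] {h k a b c d : R}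
    (hhk : IsCoprime h k) (hdet : IsUnit (a * d - b * c)) :
    IsCoprime (a * h + b * k) (c * h + d * k) := by
  obtain ⟨u, v, huv⟩ := hhk
  obtain ⟨e, he⟩ := hdet.exists_right_inv
  -- the adjugate scaled by `e` recovers `h` and `k` from the new pair
  exact ⟨e * (u * d - v * c), e * (v * a - u * b),
    by linear_combination (e * (a * d - b * c)) * huv + he⟩

namespace Rat

theorem num_den_of_eq_moebius {q r : ℚ} {a b c d : ℤ} (hdet : IsUnit (a * d - b * c))
    (hpos : 0 < c * q.num + d * q.den) (hr : r = (a * q + b) / (c * q + d)) :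
    r.num = a * q.num + b * q.den ∧ (r.den : ℤ) = c * q.num + d * q.den := by
  have hcop : Nat.Coprime (a * q.num + b * q.den).natAbs (c * q.num + d * q.den).natAbs :=
    Int.isCoprime_iff_gcd_eq_one.mp <|
      q.isCoprime_num_den.mul_add_mul_of_isUnit_det hdet
  have hk : (q.den : ℚ) ≠ 0 := by positivity
  have hr' : r = ((a * q.num + b * q.den : ℤ) : ℚ) / ((c * q.num + d * q.den : ℤ) : ℚ) := by
    rw [hr, ← mul_div_mul_right _ _ hk]
    push_cast
    rw [← mul_den_eq_num q]
    ring
  subst hr'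
  exact ⟨num_div_eq_of_coprime hpos hcop, den_div_eq_of_coprime hpos hcop⟩

end Rat

section OrderedField

variable {𝕜 : Type*} [Field 𝕜] [LinearOrder 𝕜] [IsStrictOrderedRing 𝕜]

theorem strictAntiOn_one_sub_div_two_sub :
    StrictAntiOn (fun x : 𝕜 => (1 - x) / (2 - x)) (Set.Iio 2) := by
  intro x hx y hy hxy
  simp only [Set.mem_Iio] at hx hy
  rw [div_lt_div_iff₀ (sub_pos.mpr hy) (sub_pos.mpr hx)]
  nlinarith

theorem one_sub_div_two_sub_mem_Icc {x : 𝕜} (hx0 : 0 ≤ x) (hx1 : x ≤ 1) :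
    (1 - x) / (2 - x) ∈ Set.Icc 0 (1 / 2) := by
  have h2 : 0 < 2 - x := by linarith
  constructor
  · exact div_nonneg (by linarith) h2.le
  · rw [div_le_iff₀ h2]
    linarith

theorem one_sub_two_mul_div_one_sub_mem_Icc {x : 𝕜} (hx0 : 0 ≤ x) (hx1 : x ≤ 1 / 2) :
    (1 - 2 * x) / (1 - x) ∈ Set.Icc 0 1 := by
  have h1 : 0 < 1 - x := by linarith
  constructor
  · exact div_nonneg (by linarith) h1.le
  · rw [div_le_one h1]
    linarith

theorem one_sub_div_two_sub_one_sub_two_mul_div_one_sub {x : 𝕜} (hx : x ≠ 1) :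
    (1 - (1 - 2 * x) / (1 - x)) / (2 - (1 - 2 * x) / (1 - x)) = x := by
  have h1 : 1 - x ≠ 0 := sub_ne_zero.mpr hx.symm
  field_simp
  ring

end OrderedField

namespace Rat

theorem num_den_one_sub_div_two_sub {q : ℚ} (hq : q ≤ 1) :
    ((1 - q) / (2 - q)).num = q.den - q.num ∧
      (((1 - q) / (2 - q)).den : ℤ) = 2 * q.den - q.num := by
  have hk : (0 : ℤ) < q.den := mod_cast q.pos
  have hhk : q.num ≤ q.den := num_le_denom_iff.mpr hq
  obtain ⟨hnum, hden⟩ := num_den_of_eq_moebius (a := -1) (b := 1) (c := -1) (d := 2)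
    (r := (1 - q) / (2 - q)) (by norm_num) (by linarith) (by push_cast; ring)
  exact ⟨by linarith, by linarith⟩

theorem num_den_one_sub_two_mul_div_one_sub {p : ℚ} (hp : p < 1) :
    ((1 - 2 * p) / (1 - p)).num = p.den - 2 * p.num ∧
      (((1 - 2 * p) / (1 - p)).den : ℤ) = p.den - p.num := by
  have hhk : p.num < p.den := num_lt_denom_iff.mpr hp
  obtain ⟨hnum, hden⟩ := num_den_of_eq_moebius (a := -2) (b := 1) (c := -1) (d := 1)
    (r := (1 - 2 * p) / (1 - p)) (by norm_num) (by linarith) (by push_cast; ring)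
  exact ⟨by linarith, by linarith⟩

end Rat

theorem mapsTo_farey_fareyB (m : ℕ) :
    Set.MapsTo (fun q : ℚ => (1 - q) / (2 - q)) (farey m)
      {q ∈ fareyB (2 * m) m | q ≤ 1 / 2} := by
  rintro q ⟨hq0, hq1, hqm⟩
  beta_reduce
  obtain ⟨hnum, hden⟩ := Rat.num_den_one_sub_div_two_sub hq1
  obtain ⟨hr0, hr2⟩ := one_sub_div_two_sub_mem_Icc hq0 hq1
  have hh : 0 ≤ q.num := Rat.num_nonneg.mpr hq0
  have hkm : (q.den : ℤ) ≤ m := mod_cast hqm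
  exact ⟨⟨⟨hr0, by linarith, by zify; omega⟩, by omega, by omega⟩, hr2⟩

theorem surjOn_farey_fareyB (m : ℕ) :
    Set.SurjOn (fun q : ℚ => (1 - q) / (2 - q)) (farey m)
      {q ∈ fareyB (2 * m) m | q ≤ 1 / 2} := by
  rintro p ⟨⟨⟨hp0, -, -⟩, hpB, -⟩, hp2⟩
  have hp1 : p < 1 := by linarith
  obtain ⟨-, hden⟩ := Rat.num_den_one_sub_two_mul_div_one_sub hp1
  obtain ⟨hx0, hx1⟩ := one_sub_two_mul_div_one_sub_mem_Icc hp0 hp2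
  refine ⟨(1 - 2 * p) / (1 - p), ⟨hx0, hx1, ?_⟩,
    one_sub_div_two_sub_one_sub_two_mul_div_one_sub hp1.ne⟩
  zify
  push_cast at hpB
  omega

theorem stmt10_general (m : ℕ) :
    Set.BijOn (fun q : ℚ => (1 - q) / (2 - q)) (farey m)
      {q ∈ fareyB (2 * m) m | q ≤ 1 / 2} ∧
    ∀ x ∈ farey m, ∀ y ∈ farey m, x < y →
      (1 - y) / (2 - y) < (1 - x) / (2 - x) := by
  have hsub : farey m ⊆ Set.Iio 2 := fun q hq => hq.2.1.trans_lt one_lt_two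
  have hanti := strictAntiOn_one_sub_div_two_sub.mono hsub
  exact ⟨⟨mapsTo_farey_fareyB m, hanti.injOn, surjOn_farey_fareyB m⟩,
    fun x hx y hy hxy => hanti hx hy hxy⟩

/-- `h/k ↦ (k-h)/(2k-h)`, i.e. `q ↦ (1-q)/(2-q)`, is an order-reversing
bijection of `F_m` onto the lower half of `F(B(2m),m)`. -/
theorem stmt10 (m : ℕ) (hm : 0 < m) :
    Set.BijOn (fun q : ℚ => (1 - q) / (2 - q)) (farey m)
      {q ∈ fareyB (2 * m) m | q ≤ 1 / 2} ∧
    ∀ x ∈ farey m, ∀ y ∈ farey m, x < y →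
      (1 - y) / (2 - y) < (1 - x) / (2 - x) :=
  stmt10_general m
end

section
/- For every positive integer m, the map h/k ↦ k/(h+k) (matrix [[0,1],[1,1]]) is an order-reversing bijection from the Farey sequence F_m onto F^{≥1/2}(B(2m),m), the fractions of F(B(2m),m) that are at least 1/2. -/
theorem Rat.one_add_num (q : ℚ) : (1 + q).num = q.num + q.den := by
  have h := Rat.mul_den_eq_num (1 + q)
  rw [Rat.ofNat_add_den, add_mul, one_mul, Rat.mul_den_eq_num] at h
  exact_mod_cast (by linarith : ((1 + q).num : ℚ) = q.num + q.den)

theorem Rat.one_div_one_add_num {q : ℚ} (hq : 0 ≤ q) : (1 / (1 + q)).num = q.den := by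
  have hpos : 0 < (1 + q).num := Rat.num_pos.2 (by linarith)
  rw [one_div, Rat.num_inv, Int.sign_eq_one_of_pos hpos, one_mul, Rat.ofNat_add_den]

theorem Rat.one_div_one_add_den {q : ℚ} (hq : 0 ≤ q) :
    ((1 / (1 + q)).den : ℤ) = q.num + q.den := by
  have hpos : 0 < (1 + q).num := Rat.num_pos.2 (by linarith)
  rw [one_div, Rat.den_inv, if_neg hpos.ne', Int.natCast_natAbs, abs_of_pos hpos, Rat.one_add_num]

theorem strictAntiOn_one_div_one_add {α : Type*} [Field α] [LinearOrder α]
    [IsStrictOrderedRing α] : StrictAntiOn (fun x : α => 1 / (1 + x)) (Set.Ioi (-1)) := by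
  intro x hx y hy hxy
  simp only [Set.mem_Ioi] at hx hy
  exact one_div_lt_one_div_of_lt (by linarith) (by linarith)

theorem farey_subset_Ioi (m : ℕ) : farey m ⊆ Set.Ioi (-1) :=
  fun _ hq => Set.mem_Ioi.2 (by linarith [hq.1])

theorem mapsTo_one_div_one_add_farey (m : ℕ) :
    Set.MapsTo (fun q : ℚ => 1 / (1 + q)) (farey m) {x ∈ fareyB (2 * m) m | 1 / 2 ≤ x} := by
  rintro q ⟨hq0, hq1, hqm⟩
  have hnum := Rat.one_div_one_add_num hq0
  have hden := Rat.one_div_one_add_den hq0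
  have hhk : q.num ≤ q.den := Rat.num_le_denom_iff.2 hq1
  have hkm : (q.den : ℤ) ≤ m := by exact_mod_cast hqm
  have h1q : (0 : ℚ) < 1 + q := by linarith
  refine ⟨⟨⟨by positivity, ?_, ?_⟩, ?_, ?_⟩, ?_⟩
  · rw [div_le_one h1q]; linarith
  · have : ((1 / (1 + q)).den : ℤ) ≤ 2 * m := by rw [hden]; omega
    exact_mod_cast this
  · rw [hnum, hden]; omega
  · rw [hnum]; omega
  · rw [le_div_iff₀ h1q]; linarith

theorem surjOn_one_div_one_add_farey (m : ℕ) :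
    Set.SurjOn (fun q : ℚ => 1 / (1 + q)) (farey m) {x ∈ fareyB (2 * m) m | 1 / 2 ≤ x} := by
  rintro x ⟨⟨⟨-, hx1, -⟩, -, hxm⟩, hhalf⟩
  have hx0 : 0 < x := by linarith
  have hinv : 1 / (1 + (1 / x - 1)) = x := by rw [add_sub_cancel, one_div_one_div]
  have hp0 : 0 ≤ 1 / x - 1 := by rw [sub_nonneg, le_div_iff₀ hx0]; linarith
  refine ⟨1 / x - 1, ⟨hp0, ?_, ?_⟩, hinv⟩
  · rw [sub_le_iff_le_add, div_le_iff₀ hx0]; linarith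
  · have hnum := Rat.one_div_one_add_num hp0
    rw [hinv] at hnum
    omega

theorem stmt11_general (m : ℕ) :
    Set.BijOn (fun q : ℚ => 1 / (1 + q)) (farey m)
      {q ∈ fareyB (2 * m) m | 1 / 2 ≤ q} ∧
    ∀ x ∈ farey m, ∀ y ∈ farey m, x < y → 1 / (1 + y) < 1 / (1 + x) := by
  have hanti := strictAntiOn_one_div_one_add.mono (farey_subset_Ioi m)
  exact ⟨⟨mapsTo_one_div_one_add_farey m, hanti.injOn, surjOn_one_div_one_add_farey m⟩,
    fun x hx y hy => hanti hx hy⟩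

/-- `h/k ↦ k/(h+k)`, i.e. `q ↦ 1/(1+q)`, is an order-reversing bijection of
`F_m` onto the upper half of `F(B(2m),m)`. -/
theorem stmt11 (m : ℕ) (hm : 0 < m) :
    Set.BijOn (fun q : ℚ => 1 / (1 + q)) (farey m)
      {q ∈ fareyB (2 * m) m | 1 / 2 ≤ q} ∧
    ∀ x ∈ farey m, ∀ y ∈ farey m, x < y → 1 / (1 + y) < 1 / (1 + x) :=
  stmt11_general m
end

section
/- For every positive integer m, the map h/k ↦ h/(3h-k) (matrix [[1,0],[3,-1]]) is an order-reversing bijection of F^{≥1/2}(B(2m),m) onto itself. -/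
/-!
On `q = h/k ≥ 1/2` the map `q ↦ q/(3q-1)` sends `h/k` to `h/(3h-k)`, and this fraction is again
reduced because `gcd(h, 3h-k) = gcd(h, k) = 1`. So the numerator is kept and the denominator
becomes `3h - k`; the inequalities `k ≤ 2h`, `h ≤ k`, `k ≤ 2m`, `k - m ≤ h ≤ m` cutting out
`F^{≥1/2}(B(2m),m)` are then permuted among themselves. The map is a Möbius involution, and
it is strictly decreasing on `q > 1/3`, where its denominator is positive.
-/

namespace Rat

lemma half_le_iff_den_le_two_mul_num (q : ℚ) : 1 / 2 ≤ q ↔ (q.den : ℤ) ≤ 2 * q.num := by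
  rw [Rat.le_iff]; norm_num; omega

lemma third_lt_iff_den_lt_three_mul_num (q : ℚ) : 1 / 3 < q ↔ (q.den : ℤ) < 3 * q.num := by
  rw [Rat.lt_iff]; norm_num; omega

end Rat

lemma div_three_mul_sub_one_eq_num_div {q : ℚ} (hq : 1 / 3 < q) :
    q / (3 * q - 1) = (q.num : ℚ) / ((3 * q.num - q.den : ℤ) : ℚ) := by
  have hden : ((3 * q.num - q.den : ℤ) : ℚ) ≠ 0 := by
    have := (Rat.third_lt_iff_den_lt_three_mul_num q).mp hq
    exact_mod_cast (by omega : 3 * q.num - q.den ≠ 0)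
  conv_lhs => rw [← Rat.num_div_den q]
  push_cast at hden ⊢
  field_simp

lemma num_coprime_three_mul_num_sub_den (q : ℚ) :
    Nat.Coprime q.num.natAbs (3 * q.num - q.den).natAbs := by
  have hq : IsCoprime q.num (q.den : ℤ) := Int.isCoprime_iff_gcd_eq_one.mpr q.reduced
  have h3 : IsCoprime q.num (3 * q.num - q.den) := by
    simpa [sub_eq_neg_add, mul_comm] using hq.neg_right.add_mul_left_right 3
  exact Int.isCoprime_iff_gcd_eq_one.mp h3

lemma num_div_three_mul_sub_one {q : ℚ} (hq : 1 / 3 < q) : (q / (3 * q - 1)).num = q.num := by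
  have hpos := (Rat.third_lt_iff_den_lt_three_mul_num q).mp hq
  rw [div_three_mul_sub_one_eq_num_div hq]
  exact Rat.num_div_eq_of_coprime (by omega) (num_coprime_three_mul_num_sub_den q)

lemma den_div_three_mul_sub_one {q : ℚ} (hq : 1 / 3 < q) :
    ((q / (3 * q - 1)).den : ℤ) = 3 * q.num - q.den := by
  have hpos := (Rat.third_lt_iff_den_lt_three_mul_num q).mp hq
  rw [div_three_mul_sub_one_eq_num_div hq]
  exact Rat.den_div_eq_of_coprime (by omega) (num_coprime_three_mul_num_sub_den q)

lemma div_three_mul_sub_one_involutive {q : ℚ} (hq : 3 * q - 1 ≠ 0) :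
    q / (3 * q - 1) / (3 * (q / (3 * q - 1)) - 1) = q := by
  have h : 3 * (q / (3 * q - 1)) - 1 = 1 / (3 * q - 1) := by field_simp; ring
  rw [h, div_div_eq_mul_div, div_one, div_mul_cancel₀ q hq]

lemma strictAntiOn_div_three_mul_sub_one :
    StrictAntiOn (fun q : ℚ => q / (3 * q - 1)) (Set.Ioi (1 / 3)) := by
  intro x hx y hy hxy
  simp only [Set.mem_Ioi] at hx hy
  rw [div_lt_div_iff₀ (by linarith) (by linarith)]
  nlinarith

lemma mem_upper_fareyB_iff {n m : ℕ} {q : ℚ} :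
    q ∈ {q ∈ fareyB n m | 1 / 2 ≤ q} ↔
      (q.den : ℤ) ≤ 2 * q.num ∧ q.num ≤ q.den ∧ (q.den : ℤ) ≤ n ∧
        (m : ℤ) + q.den - n ≤ q.num ∧ q.num ≤ m := by
  simp only [fareyB, farey, Set.mem_ofPred_eq, Rat.half_le_iff_den_le_two_mul_num,
    ← Rat.num_le_denom_iff, ← Rat.num_nonneg]
  omega

lemma mapsTo_div_three_mul_sub_one_upper_fareyB (m : ℕ) :
    Set.MapsTo (fun q : ℚ => q / (3 * q - 1))
      {q ∈ fareyB (2 * m) m | 1 / 2 ≤ q} {q ∈ fareyB (2 * m) m | 1 / 2 ≤ q} := by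
  intro q hq
  have hthird : 1 / 3 < q := by linarith [hq.2]
  rw [mem_upper_fareyB_iff] at hq ⊢
  rw [num_div_three_mul_sub_one hthird, den_div_three_mul_sub_one hthird]
  omega

theorem stmt13_general (m : ℕ) :
    Set.BijOn (fun q : ℚ => q / (3 * q - 1))
      {q ∈ fareyB (2 * m) m | 1 / 2 ≤ q} {q ∈ fareyB (2 * m) m | 1 / 2 ≤ q} ∧
    ∀ x ∈ {q ∈ fareyB (2 * m) m | 1 / 2 ≤ q},
      ∀ y ∈ {q ∈ fareyB (2 * m) m | 1 / 2 ≤ q}, x < y →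
        y / (3 * y - 1) < x / (3 * x - 1) := by
  have hthird : ∀ q ∈ {q ∈ fareyB (2 * m) m | 1 / 2 ≤ q}, (1 / 3 : ℚ) < q :=
    fun q hq => by linarith [hq.2]
  have hinv : Set.InvOn (fun q : ℚ => q / (3 * q - 1)) (fun q : ℚ => q / (3 * q - 1))
      {q ∈ fareyB (2 * m) m | 1 / 2 ≤ q} {q ∈ fareyB (2 * m) m | 1 / 2 ≤ q} := by
    have h : Set.LeftInvOn (fun q : ℚ => q / (3 * q - 1)) (fun q : ℚ => q / (3 * q - 1))
        {q ∈ fareyB (2 * m) m | 1 / 2 ≤ q} := fun q hq =>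
      div_three_mul_sub_one_involutive (by linarith [hthird q hq])
    exact ⟨h, h⟩
  refine ⟨hinv.bijOn (mapsTo_div_three_mul_sub_one_upper_fareyB m)
    (mapsTo_div_three_mul_sub_one_upper_fareyB m), fun x hx y hy hxy => ?_⟩
  exact strictAntiOn_div_three_mul_sub_one (hthird x hx) (hthird y hy) hxy

/-- `h/k ↦ h/(3h-k)`, i.e. `q ↦ q/(3q-1)`, is an order-reversing bijection of
the upper half of `F(B(2m),m)` onto itself. -/
theorem stmt13 (m : ℕ) (hm : 0 < m) :
    Set.BijOn (fun q : ℚ => q / (3 * q - 1))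
      {q ∈ fareyB (2 * m) m | 1 / 2 ≤ q} {q ∈ fareyB (2 * m) m | 1 / 2 ≤ q} ∧
    ∀ x ∈ {q ∈ fareyB (2 * m) m | 1 / 2 ≤ q},
      ∀ y ∈ {q ∈ fareyB (2 * m) m | 1 / 2 ≤ q}, x < y →
        y / (3 * y - 1) < x / (3 * x - 1) :=
  stmt13_general m
end

section
/- For every positive integer m, the map h/k ↦ (k-h)/(2k-3h) (matrix [[-1,1],[-3,2]]) is an order-preserving bijection from F^{≤1/2}(B(2m),m) onto F^{≥1/2}(B(2m),m), and the map h/k ↦ (2h-k)/(3h-k) (matrix [[2,-1],[3,-1]]) is its order-preserving inverse bijection from F^{≥1/2}(B(2m),m) onto F^{≤1/2}(B(2m),m). -/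
theorem Rat.num_den_div_of_det_eq_one {a b c d : ℤ} (hdet : a * d - b * c = 1) {q : ℚ}
    (hpos : 0 < c * q.num + d * q.den) :
    ((a * q + b) / (c * q + d)).num = a * q.num + b * q.den ∧
      (((a * q + b) / (c * q + d)).den : ℤ) = c * q.num + d * q.den := by
  have hk : (q.den : ℚ) ≠ 0 := by positivity
  have hq : (a * q + b) / (c * q + d) =
      ((a * q.num + b * q.den : ℤ) : ℚ) / ((c * q.num + d * q.den : ℤ) : ℚ) := by
    rw [← mul_div_mul_right _ _ hk]
    push_cast
    rw [← Rat.mul_den_eq_num]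
    ring
  have hcop : IsCoprime (a * q.num + b * q.den) (c * q.num + d * q.den) := by
    -- `(q.num, q.den)` is the image of the new pair under the inverse matrix `[[d, -b], [-c, a]]`
    obtain ⟨u, v, huv⟩ : IsCoprime q.num q.den := Int.isCoprime_iff_gcd_eq_one.2 q.reduced
    exact ⟨d * u - c * v, a * v - b * u,
      by linear_combination (u * q.num + v * q.den) * hdet + huv⟩
  rw [hq]
  have hcop' := Int.isCoprime_iff_gcd_eq_one.1 hcop
  exact ⟨Rat.num_div_eq_of_coprime hpos hcop', Rat.den_div_eq_of_coprime hpos hcop'⟩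

theorem Rat.le_half_iff {q : ℚ} : q ≤ 1 / 2 ↔ 2 * q.num ≤ q.den := by
  rw [Rat.le_iff]
  norm_num
  omega

theorem Rat.half_le_iff {q : ℚ} : 1 / 2 ≤ q ↔ q.den ≤ 2 * q.num := by
  rw [Rat.le_iff]
  norm_num
  omega

theorem mem_fareyB_iff {n m : ℕ} {q : ℚ} :
    q ∈ fareyB n m ↔ 0 ≤ q.num ∧ q.num ≤ q.den ∧ (q.den : ℤ) ≤ n ∧
      (m : ℤ) + q.den - n ≤ q.num ∧ q.num ≤ m := by
  simp only [fareyB, farey, Set.mem_ofPred_eq, Rat.num_nonneg, Rat.num_le_denom_iff, Nat.cast_le,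
    and_assoc]

theorem mapsTo_fareyB_lower_upper (m : ℕ) :
    Set.MapsTo (fun q : ℚ => (1 - q) / (2 - 3 * q))
      {q ∈ fareyB (2 * m) m | q ≤ 1 / 2} {q ∈ fareyB (2 * m) m | 1 / 2 ≤ q} := by
  rintro q ⟨hq, hhalf⟩
  rw [mem_fareyB_iff] at hq
  rw [Rat.le_half_iff] at hhalf
  have hk : (0 : ℤ) < q.den := by exact_mod_cast q.den_pos
  have hf : (1 - q) / (2 - 3 * q) =
      ((-1 : ℤ) * q + (1 : ℤ)) / ((-3 : ℤ) * q + (2 : ℤ)) := by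
    push_cast; ring
  obtain ⟨hnum, hden⟩ := Rat.num_den_div_of_det_eq_one (a := -1) (b := 1) (c := -3) (d := 2)
    (q := q) (by norm_num) (by omega)
  simp only [Set.mem_ofPred_eq, mem_fareyB_iff, Rat.half_le_iff, hf, hnum, hden]
  push_cast
  omega

theorem mapsTo_fareyB_upper_lower (m : ℕ) :
    Set.MapsTo (fun q : ℚ => (2 * q - 1) / (3 * q - 1))
      {q ∈ fareyB (2 * m) m | 1 / 2 ≤ q} {q ∈ fareyB (2 * m) m | q ≤ 1 / 2} := by
  rintro q ⟨hq, hhalf⟩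
  rw [mem_fareyB_iff] at hq
  rw [Rat.half_le_iff] at hhalf
  have hk : (0 : ℤ) < q.den := by exact_mod_cast q.den_pos
  have hf : (2 * q - 1) / (3 * q - 1) =
      ((2 : ℤ) * q + (-1 : ℤ)) / ((3 : ℤ) * q + (-1 : ℤ)) := by
    push_cast; ring
  obtain ⟨hnum, hden⟩ := Rat.num_den_div_of_det_eq_one (a := 2) (b := -1) (c := 3) (d := -1)
    (q := q) (by norm_num) (by omega)
  simp only [Set.mem_ofPred_eq, mem_fareyB_iff, Rat.le_half_iff, hf, hnum, hden]
  push_cast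
  omega

section
variable {K : Type*} [Field K] [LinearOrder K] [IsStrictOrderedRing K]

theorem invOn_two_mul_sub_one_div_one_sub_div :
    Set.InvOn (fun q : K => (2 * q - 1) / (3 * q - 1)) (fun q : K => (1 - q) / (2 - 3 * q))
      (Set.Iio (2 / 3)) (Set.Ioi (1 / 3)) := by
  constructor
  · intro x (hx : x < 2 / 3)
    have hx : (2 : K) - 3 * x ≠ 0 := by linarith
    have h : 3 * ((1 - x) / (2 - 3 * x)) - 1 = 1 / (2 - 3 * x) := by field_simp; ring
    dsimp only
    rw [h, div_div_eq_mul_div, div_one, sub_mul, mul_assoc, div_mul_cancel₀ _ hx]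
    ring
  · intro y (hy : 1 / 3 < y)
    have hy : (3 : K) * y - 1 ≠ 0 := by linarith
    have h : 2 - 3 * ((2 * y - 1) / (3 * y - 1)) = 1 / (3 * y - 1) := by field_simp; ring
    dsimp only
    rw [h, div_div_eq_mul_div, div_one, sub_mul, div_mul_cancel₀ _ hy]
    ring

theorem strictMonoOn_one_sub_div :
    StrictMonoOn (fun q : K => (1 - q) / (2 - 3 * q)) (Set.Iio (2 / 3)) := by
  intro x (hx : x < 2 / 3) y (hy : y < 2 / 3) hxy
  rw [div_lt_div_iff₀ (by linarith) (by linarith)]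
  nlinarith

theorem strictMonoOn_two_mul_sub_one_div :
    StrictMonoOn (fun q : K => (2 * q - 1) / (3 * q - 1)) (Set.Ioi (1 / 3)) := by
  intro x (hx : 1 / 3 < x) y (hy : 1 / 3 < y) hxy
  rw [div_lt_div_iff₀ (by linarith) (by linarith)]
  nlinarith

end

theorem stmt14_general (m : ℕ) :
    Set.BijOn (fun q : ℚ => (1 - q) / (2 - 3 * q))
      {q ∈ fareyB (2 * m) m | q ≤ 1 / 2} {q ∈ fareyB (2 * m) m | 1 / 2 ≤ q} ∧
    (∀ x ∈ {q ∈ fareyB (2 * m) m | q ≤ 1 / 2},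
      ∀ y ∈ {q ∈ fareyB (2 * m) m | q ≤ 1 / 2}, x < y →
        (1 - x) / (2 - 3 * x) < (1 - y) / (2 - 3 * y)) ∧
    Set.BijOn (fun q : ℚ => (2 * q - 1) / (3 * q - 1))
      {q ∈ fareyB (2 * m) m | 1 / 2 ≤ q} {q ∈ fareyB (2 * m) m | q ≤ 1 / 2} ∧
    (∀ x ∈ {q ∈ fareyB (2 * m) m | 1 / 2 ≤ q},
      ∀ y ∈ {q ∈ fareyB (2 * m) m | 1 / 2 ≤ q}, x < y →
        (2 * x - 1) / (3 * x - 1) < (2 * y - 1) / (3 * y - 1)) ∧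
    (∀ x ∈ {q ∈ fareyB (2 * m) m | q ≤ 1 / 2},
      (2 * ((1 - x) / (2 - 3 * x)) - 1) / (3 * ((1 - x) / (2 - 3 * x)) - 1)
        = x) ∧
    (∀ y ∈ {q ∈ fareyB (2 * m) m | 1 / 2 ≤ q},
      (1 - (2 * y - 1) / (3 * y - 1)) / (2 - 3 * ((2 * y - 1) / (3 * y - 1)))
        = y) := by
  have hL : {q ∈ fareyB (2 * m) m | q ≤ 1 / 2} ⊆ Set.Iio (2 / 3) :=
    fun q hq => hq.2.trans_lt (by norm_num)
  have hU : {q ∈ fareyB (2 * m) m | 1 / 2 ≤ q} ⊆ Set.Ioi (1 / 3) :=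
    fun q hq => (by norm_num : (1 : ℚ) / 3 < 1 / 2).trans_le hq.2
  have hinv := invOn_two_mul_sub_one_div_one_sub_div.mono hL hU
  exact ⟨hinv.bijOn (mapsTo_fareyB_lower_upper m) (mapsTo_fareyB_upper_lower m),
    fun x hx y hy => strictMonoOn_one_sub_div (hL hx) (hL hy),
    hinv.symm.bijOn (mapsTo_fareyB_upper_lower m) (mapsTo_fareyB_lower_upper m),
    fun x hx y hy => strictMonoOn_two_mul_sub_one_div (hU hx) (hU hy),
    hinv.1, hinv.2⟩

/-- `q ↦ (1-q)/(2-3q)` is an order-preserving bijection from the lower half of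
`F(B(2m),m)` onto the upper half, with order-preserving inverse
`q ↦ (2q-1)/(3q-1)`. -/
theorem stmt14 (m : ℕ) (hm : 0 < m) :
    Set.BijOn (fun q : ℚ => (1 - q) / (2 - 3 * q))
      {q ∈ fareyB (2 * m) m | q ≤ 1 / 2} {q ∈ fareyB (2 * m) m | 1 / 2 ≤ q} ∧
    (∀ x ∈ {q ∈ fareyB (2 * m) m | q ≤ 1 / 2},
      ∀ y ∈ {q ∈ fareyB (2 * m) m | q ≤ 1 / 2}, x < y →
        (1 - x) / (2 - 3 * x) < (1 - y) / (2 - 3 * y)) ∧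
    Set.BijOn (fun q : ℚ => (2 * q - 1) / (3 * q - 1))
      {q ∈ fareyB (2 * m) m | 1 / 2 ≤ q} {q ∈ fareyB (2 * m) m | q ≤ 1 / 2} ∧
    (∀ x ∈ {q ∈ fareyB (2 * m) m | 1 / 2 ≤ q},
      ∀ y ∈ {q ∈ fareyB (2 * m) m | 1 / 2 ≤ q}, x < y →
        (2 * x - 1) / (3 * x - 1) < (2 * y - 1) / (3 * y - 1)) ∧
    (∀ x ∈ {q ∈ fareyB (2 * m) m | q ≤ 1 / 2},
      (2 * ((1 - x) / (2 - 3 * x)) - 1) / (3 * ((1 - x) / (2 - 3 * x)) - 1)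
        = x) ∧
    (∀ y ∈ {q ∈ fareyB (2 * m) m | 1 / 2 ≤ q},
      (1 - (2 * y - 1) / (3 * y - 1)) / (2 - 3 * ((2 * y - 1) / (3 * y - 1)))
        = y) :=
  stmt14_general m
end

section
/- Let m and n be positive integers with n ≥ 2m, and set s := ⌊log₂(n/m)⌋. For any ordered collection (M₁,…,M_s) of matrices each equal to [[1,0],[1,1]] or [[0,1],[-1,2]], the map sending h/k (as a column vector [h;k]) to (M_s · M_{s-1} · ⋯ · M₁) · [h;k] is an order-preserving injection from the Farey sequence F_m into the Farey sequence F_n; moreover every image fraction is ≤ 1/2 if M_s = [[1,0],[1,1]] and ≥ 1/2 if M_s = [[0,1],[-1,2]]. -/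
/-- Action of an integer 2×2 matrix on a fraction `h/k` written as the column
vector `[h; k]`. -/
def matAct (S : Matrix (Fin 2) (Fin 2) ℤ) (q : ℚ) : ℚ :=
  ((S 0 0 * q.num + S 0 1 * (q.den : ℤ) : ℤ) : ℚ) /
    ((S 1 0 * q.num + S 1 1 * (q.den : ℤ) : ℤ) : ℚ)

/-- The matrix `[[1,0],[1,1]]`. -/
def matA : Matrix (Fin 2) (Fin 2) ℤ := !![1, 0; 1, 1]

/-- The matrix `[[0,1],[-1,2]]`. -/
def matB : Matrix (Fin 2) (Fin 2) ℤ := !![0, 1; -1, 2]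

/-- The matrix `[[-1,1],[0,1]]`. -/
def matR : Matrix (Fin 2) (Fin 2) ℤ := !![-1, 1; 0, 1]

/-!
Work with column vectors `[h; k]`, `0 ≤ h ≤ k`, `0 < k`, rather than with fractions. `A` and `B`
map such a vector to another one with `k' ≤ 2k`, so `M_s ⋯ M₁ · [h; k]` has second coordinate
at most `2^s k ≤ 2^s m ≤ n`, and the fraction it represents (possibly after cancelling) has
denominator at most that. Since `det (M_s ⋯ M₁) = 1`, the cross product `h k' - h' k` of two
vectors is preserved, which gives strict monotonicity. Finally `A` maps `[0, 1]` into `[0, 1/2]`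
and `B` into `[1/2, 1]`, which decides on which side of `1/2` the image lies.
-/

open Matrix Set

def unitIntervalVecs : Set (Fin 2 → ℤ) := {v | 0 ≤ v 0 ∧ v 0 ≤ v 1 ∧ 0 < v 1}

def vecToRat (v : Fin 2 → ℤ) : ℚ := v 0 / v 1

lemma vecToRat_numDen (q : ℚ) : vecToRat ![q.num, q.den] = q := by
  simp [vecToRat, Rat.num_div_den]

lemma numDen_mem_unitIntervalVecs {q : ℚ} (hq : q ∈ Icc 0 1) :
    ![q.num, (q.den : ℤ)] ∈ unitIntervalVecs := by
  have hden : (0 : ℚ) < q.den := by positivity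
  have hle : q.num ≤ q.den := by
    have := hq.2
    rw [← Rat.num_div_den q, div_le_one hden] at this
    exact_mod_cast this
  exact ⟨Rat.num_nonneg.mpr hq.1, hle, by simpa using q.pos⟩

lemma vecToRat_mem_Icc {v : Fin 2 → ℤ} (hv : v ∈ unitIntervalVecs) :
    vecToRat v ∈ Icc 0 1 := by
  obtain ⟨h0, hle, hpos⟩ := hv
  have hposQ : (0 : ℚ) < v 1 := by exact_mod_cast hpos
  exact ⟨div_nonneg (by exact_mod_cast h0) hposQ.le,
    (div_le_one hposQ).mpr (by exact_mod_cast hle)⟩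

lemma den_vecToRat_le {v : Fin 2 → ℤ} (hv : 0 < v 1) : ((vecToRat v).den : ℤ) ≤ v 1 := by
  apply Int.le_of_dvd hv
  simpa [vecToRat, Rat.divInt_eq_div] using Rat.den_dvd (v 0) (v 1)

lemma vecToRat_lt_vecToRat_iff {v w : Fin 2 → ℤ} (hv : 0 < v 1) (hw : 0 < w 1) :
    vecToRat v < vecToRat w ↔ v 0 * w 1 < w 0 * v 1 := by
  rw [vecToRat, vecToRat, div_lt_div_iff₀ (by exact_mod_cast hv) (by exact_mod_cast hw)]
  exact_mod_cast Iff.rfl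

lemma matAct_eq_vecToRat (S : Matrix (Fin 2) (Fin 2) ℤ) (q : ℚ) :
    matAct S q = vecToRat (S *ᵥ ![q.num, q.den]) := by
  simp [matAct, vecToRat, mulVec, dotProduct, Fin.sum_univ_two]

lemma cross_mulVec (S : Matrix (Fin 2) (Fin 2) ℤ) (v w : Fin 2 → ℤ) :
    (S *ᵥ v) 0 * (S *ᵥ w) 1 - (S *ᵥ w) 0 * (S *ᵥ v) 1 =
      S.det * (v 0 * w 1 - w 0 * v 1) := by
  simp only [mulVec, dotProduct, Fin.sum_univ_two, det_fin_two]
  ring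

lemma strictMonoOn_matAct {S : Matrix (Fin 2) (Fin 2) ℤ}
    (hS : MapsTo (S *ᵥ ·) unitIntervalVecs unitIntervalVecs) (hdet : 0 < S.det) :
    StrictMonoOn (matAct S) (Icc 0 1) := by
  intro p hp q hq hpq
  have hp' := numDen_mem_unitIntervalVecs hp
  have hq' := numDen_mem_unitIntervalVecs hq
  rw [← vecToRat_numDen p, ← vecToRat_numDen q, vecToRat_lt_vecToRat_iff hp'.2.2 hq'.2.2] at hpq
  rw [matAct_eq_vecToRat, matAct_eq_vecToRat,
    vecToRat_lt_vecToRat_iff (hS hp').2.2 (hS hq').2.2, ← sub_pos, cross_mulVec]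
  exact mul_pos hdet (sub_pos.mpr hpq)

lemma mapsTo_matAct_farey {S : Matrix (Fin 2) (Fin 2) ℤ} {c m n : ℕ}
    (hS : ∀ v ∈ unitIntervalVecs, S *ᵥ v ∈ unitIntervalVecs ∧ (S *ᵥ v) 1 ≤ c * v 1)
    (hcmn : c * m ≤ n) : MapsTo (matAct S) (farey m) (farey n) := by
  intro q ⟨hq0, hq1, hqm⟩
  obtain ⟨hmem, hgrowth⟩ := hS _ (numDen_mem_unitIntervalVecs ⟨hq0, hq1⟩)
  rw [matAct_eq_vecToRat]
  refine ⟨(vecToRat_mem_Icc hmem).1, (vecToRat_mem_Icc hmem).2, ?_⟩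
  have hden := den_vecToRat_le hmem.2.2
  have hcq : (c : ℤ) * q.den ≤ n := by exact_mod_cast (Nat.mul_le_mul_left c hqm).trans hcmn
  simp only [Matrix.cons_val_one, Matrix.cons_val_fin_one] at hgrowth
  omega

lemma matA_mulVec (v : Fin 2 → ℤ) : matA *ᵥ v = ![v 0, v 0 + v 1] := by
  ext i; fin_cases i <;> simp [matA, mulVec, dotProduct, Fin.sum_univ_two]

lemma matB_mulVec (v : Fin 2 → ℤ) : matB *ᵥ v = ![v 1, 2 * v 1 - v 0] := by
  ext i; fin_cases i <;> simp [matB, mulVec, dotProduct, Fin.sum_univ_two]; ring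

lemma det_matA : matA.det = 1 := by simp [matA, det_fin_two]

lemma det_matB : matB.det = 1 := by simp [matB, det_fin_two]

lemma vecToRat_matA_mulVec_le_half {v : Fin 2 → ℤ} (hv : v ∈ unitIntervalVecs) :
    vecToRat (matA *ᵥ v) ≤ 1 / 2 := by
  obtain ⟨h0, hle, hpos⟩ := hv
  have hle' : (v 0 : ℚ) ≤ v 1 := by exact_mod_cast hle
  have h0' : (0 : ℚ) ≤ v 0 := by exact_mod_cast h0
  have hpos' : (0 : ℚ) < v 1 := by exact_mod_cast hpos
  rw [matA_mulVec, vecToRat]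
  simp only [Matrix.cons_val_zero, Matrix.cons_val_one, Matrix.cons_val_fin_one]
  rw [div_le_iff₀ (by push_cast; linarith)]
  push_cast
  linarith

lemma half_le_vecToRat_matB_mulVec {v : Fin 2 → ℤ} (hv : v ∈ unitIntervalVecs) :
    1 / 2 ≤ vecToRat (matB *ᵥ v) := by
  obtain ⟨h0, hle, hpos⟩ := hv
  have hle' : (v 0 : ℚ) ≤ v 1 := by exact_mod_cast hle
  have h0' : (0 : ℚ) ≤ v 0 := by exact_mod_cast h0
  have hpos' : (0 : ℚ) < v 1 := by exact_mod_cast hpos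
  rw [matB_mulVec, vecToRat]
  simp only [Matrix.cons_val_zero, Matrix.cons_val_one, Matrix.cons_val_fin_one]
  rw [le_div_iff₀ (by push_cast; linarith)]
  push_cast
  linarith

lemma mulVec_mem_of_eq_matA_or_matB {S : Matrix (Fin 2) (Fin 2) ℤ} (hS : S = matA ∨ S = matB)
    {v : Fin 2 → ℤ} (hv : v ∈ unitIntervalVecs) :
    S *ᵥ v ∈ unitIntervalVecs ∧ (S *ᵥ v) 1 ≤ 2 * v 1 := by
  obtain ⟨h0, hle, hpos⟩ := hv
  rcases hS with rfl | rfl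
  · simp only [matA_mulVec, unitIntervalVecs, mem_ofPred_eq, Matrix.cons_val_zero,
      Matrix.cons_val_one, Matrix.cons_val_fin_one]
    omega
  · simp only [matB_mulVec, unitIntervalVecs, mem_ofPred_eq, Matrix.cons_val_zero,
      Matrix.cons_val_one, Matrix.cons_val_fin_one]
    omega

lemma list_prod_mulVec_mem {l : List (Matrix (Fin 2) (Fin 2) ℤ)}
    (hl : ∀ S ∈ l, S = matA ∨ S = matB) {v : Fin 2 → ℤ} (hv : v ∈ unitIntervalVecs) :
    l.prod *ᵥ v ∈ unitIntervalVecs ∧ (l.prod *ᵥ v) 1 ≤ 2 ^ l.length * v 1 := by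
  induction l with
  | nil => simpa using hv
  | cons S t ih =>
    obtain ⟨ht, htgrowth⟩ := ih fun S' hS' => hl S' (List.mem_cons_of_mem S hS')
    obtain ⟨hSt, hSgrowth⟩ := mulVec_mem_of_eq_matA_or_matB (hl S List.mem_cons_self) ht
    rw [List.prod_cons, ← mulVec_mulVec, List.length_cons, pow_succ]
    exact ⟨hSt, by nlinarith⟩

lemma det_list_prod {l : List (Matrix (Fin 2) (Fin 2) ℤ)}
    (hl : ∀ S ∈ l, S = matA ∨ S = matB) : l.prod.det = 1 := by
  rw [← coe_detMonoidHom, map_list_prod]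
  refine List.prod_eq_one fun d hd => ?_
  obtain ⟨S, hS, rfl⟩ := List.mem_map.mp hd
  rcases hl S hS with rfl | rfl
  exacts [det_matA, det_matB]

lemma matAct_matA_mul_le_half {Q : Matrix (Fin 2) (Fin 2) ℤ}
    (hQ : MapsTo (Q *ᵥ ·) unitIntervalVecs unitIntervalVecs) {q : ℚ} (hq : q ∈ Icc 0 1) :
    matAct (matA * Q) q ≤ 1 / 2 := by
  rw [matAct_eq_vecToRat, ← mulVec_mulVec]
  exact vecToRat_matA_mulVec_le_half (hQ (numDen_mem_unitIntervalVecs hq))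

lemma half_le_matAct_matB_mul {Q : Matrix (Fin 2) (Fin 2) ℤ}
    (hQ : MapsTo (Q *ᵥ ·) unitIntervalVecs unitIntervalVecs) {q : ℚ} (hq : q ∈ Icc 0 1) :
    1 / 2 ≤ matAct (matB * Q) q := by
  rw [matAct_eq_vecToRat, ← mulVec_mulVec]
  exact half_le_vecToRat_matB_mulVec (hQ (numDen_mem_unitIntervalVecs hq))

lemma farey_subset_Icc (m : ℕ) : farey m ⊆ Icc 0 1 := fun _ hq => ⟨hq.1, hq.2.1⟩

lemma pow_log_div_mul_le (b : ℕ) {m n : ℕ} (h : m ≤ n) :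
    b ^ Nat.log b (n / m) * m ≤ n := by
  rcases Nat.eq_zero_or_pos m with rfl | hm
  · simp
  calc b ^ Nat.log b (n / m) * m ≤ n / m * m :=
        Nat.mul_le_mul_right m (Nat.pow_log_le_self b (Nat.div_pos h hm).ne')
    _ ≤ n := Nat.div_mul_le_self n m

lemma exists_reverse_ofFn_eq_cons {α : Type*} {s : ℕ} (M : Fin s → α) (i : Fin s)
    (hi : (i : ℕ) = s - 1) : ∃ t, (List.ofFn M).reverse = M i :: t := by
  have hne : (List.ofFn M).reverse ≠ [] := by
    simpa [← List.length_pos_iff] using i.pos.ne'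
  refine ⟨(List.ofFn M).reverse.tail, (List.cons_head_tail hne).symm.trans ?_⟩
  rw [List.head_reverse, List.getLast_ofFn]
  congr
  exact hi.symm

theorem stmt15_general (m n : ℕ) (hn : 2 * m ≤ n)
    (M : Fin (Nat.log 2 (n / m)) → Matrix (Fin 2) (Fin 2) ℤ)
    (hM : ∀ i, M i = matA ∨ M i = matB) :
    Set.MapsTo (matAct ((List.ofFn M).reverse.prod)) (farey m) (farey n) ∧
    Set.InjOn (matAct ((List.ofFn M).reverse.prod)) (farey m) ∧
    (∀ x ∈ farey m, ∀ y ∈ farey m, x < y →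
      matAct ((List.ofFn M).reverse.prod) x <
        matAct ((List.ofFn M).reverse.prod) y) ∧
    (∀ i : Fin (Nat.log 2 (n / m)), (i : ℕ) = Nat.log 2 (n / m) - 1 →
      (M i = matA → ∀ x ∈ farey m,
        matAct ((List.ofFn M).reverse.prod) x ≤ 1 / 2) ∧
      (M i = matB → ∀ x ∈ farey m,
        1 / 2 ≤ matAct ((List.ofFn M).reverse.prod) x)) := by
  have hl : ∀ S ∈ (List.ofFn M).reverse, S = matA ∨ S = matB := by
    simpa [List.mem_ofFn] using hM
  have hmono : StrictMonoOn (matAct (List.ofFn M).reverse.prod) (farey m) :=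
    (strictMonoOn_matAct (fun _ hv => (list_prod_mulVec_mem hl hv).1)
      (by rw [det_list_prod hl]; exact one_pos)).mono (farey_subset_Icc m)
  refine ⟨mapsTo_matAct_farey (c := 2 ^ Nat.log 2 (n / m))
      (fun _ hv => by simpa using list_prod_mulVec_mem hl hv) (pow_log_div_mul_le 2 (by omega)),
    hmono.injOn, hmono, fun i hi => ?_⟩
  obtain ⟨t, ht⟩ := exists_reverse_ofFn_eq_cons M i hi
  have hmapsTo : MapsTo (t.prod *ᵥ ·) unitIntervalVecs unitIntervalVecs := fun _ hv =>
    (list_prod_mulVec_mem (fun S hS => hl S (ht ▸ List.mem_cons_of_mem _ hS)) hv).1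
  rw [ht, List.prod_cons]
  exact ⟨fun hA q hq => hA ▸ matAct_matA_mul_le_half hmapsTo (farey_subset_Icc m hq),
    fun hB q hq => hB ▸ half_le_matAct_matB_mul hmapsTo (farey_subset_Icc m hq)⟩

/-- Lemma 4 (Lemma `th:3`): for `s = ⌊log₂(n/m)⌋` and any collection
`(M₁, …, M_s)` of matrices from `{A, B}`, the map
`[h;k] ↦ M_s ⋯ M₁ · [h;k]` is an order-preserving injection `F_m → F_n`;
images are `≤ 1/2` when `M_s = A` and `≥ 1/2` when `M_s = B`. -/
theorem stmt15 (m n : ℕ) (hm : 0 < m) (hn : 2 * m ≤ n)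
    (M : Fin (Nat.log 2 (n / m)) → Matrix (Fin 2) (Fin 2) ℤ)
    (hM : ∀ i, M i = matA ∨ M i = matB) :
    Set.MapsTo (matAct ((List.ofFn M).reverse.prod)) (farey m) (farey n) ∧
    Set.InjOn (matAct ((List.ofFn M).reverse.prod)) (farey m) ∧
    (∀ x ∈ farey m, ∀ y ∈ farey m, x < y →
      matAct ((List.ofFn M).reverse.prod) x <
        matAct ((List.ofFn M).reverse.prod) y) ∧
    (∀ i : Fin (Nat.log 2 (n / m)), (i : ℕ) = Nat.log 2 (n / m) - 1 →
      (M i = matA → ∀ x ∈ farey m,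
        matAct ((List.ofFn M).reverse.prod) x ≤ 1 / 2) ∧
      (M i = matB → ∀ x ∈ farey m,
        1 / 2 ≤ matAct ((List.ofFn M).reverse.prod) x)) :=
  stmt15_general m n hn M hM
end

section
/- For positive integers m < n, the number of fractions in F(B(n),m) := {h/k ∈ F_n : m+k-n ≤ h ≤ m} equals 2 + Σ_{d≥1} μ(d)·⌊m/d⌋·⌊(n-m)/d⌋, where μ is the number-theoretic Möbius function. -/
/-! The map `h/k ↦ (h, k - h)` identifies `F(B(n),m)` with the coprime pairs in
`[0, m] × [0, n - m]`, since `a/(a+b)` is in lowest terms exactly when `gcd(a, b) = 1`.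
Apart from `(0, 1)` and `(1, 0)` these pairs are positive, and they are counted by
Möbius inversion: `[gcd(a, b) = 1] = ∑_{d ∣ a, d ∣ b} μ(d)`. -/

open Finset
open scoped ArithmeticFunction.Moebius

open ArithmeticFunction in
lemma sum_divisors_moebius (g : ℕ) :
    ∑ d ∈ g.divisors, (μ d : ℤ) = if g = 1 then 1 else 0 := by
  rw [← coe_mul_zeta_apply, moebius_mul_coe_zeta, one_apply]

theorem card_coprime_Ioc_prod {a b N : ℕ} (ha : a ≤ N) :
    (#{p ∈ Ioc 0 a ×ˢ Ioc 0 b | p.1.Coprime p.2} : ℤ) =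
      ∑ d ∈ Icc 1 N, μ d * (a / d : ℕ) * (b / d : ℕ) := by
  have hcoprime : ∀ p ∈ Ioc 0 a ×ˢ Ioc 0 b, (if p.1.Coprime p.2 then (1 : ℤ) else 0) =
      ∑ d ∈ Icc 1 N, if d ∣ p.1 ∧ d ∣ p.2 then (μ d : ℤ) else 0 := by
    rintro ⟨x, y⟩ hp
    simp only [mem_product, mem_Ioc] at hp
    rw [← sum_filter, ← sum_divisors_moebius]
    refine sum_congr (ext fun d => ?_) fun _ _ => rfl
    simp only [Nat.mem_divisors, Nat.dvd_gcd_iff, mem_filter, mem_Icc]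
    constructor
    · rintro ⟨⟨hx, hy⟩, -⟩
      have hdx : d ≤ x := Nat.le_of_dvd hp.1.1 hx
      exact ⟨⟨Nat.pos_of_dvd_of_pos hx hp.1.1, hdx.trans (hp.1.2.trans ha)⟩, hx, hy⟩
    · rintro ⟨-, hx, hy⟩
      exact ⟨⟨hx, hy⟩, (Nat.gcd_pos_of_pos_left _ hp.1.1).ne'⟩
  rw [card_filter, Nat.cast_sum,
    sum_congr rfl fun p hp => by rw [Nat.cast_ite, Nat.cast_one, Nat.cast_zero, hcoprime p hp],
    sum_comm]
  refine sum_congr rfl fun d _ => ?_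
  rw [← sum_filter, sum_const, filter_product (fun x => d ∣ x) (fun y => d ∣ y), card_product,
    Nat.Ioc_filter_dvd_card_eq_div, Nat.Ioc_filter_dvd_card_eq_div, nsmul_eq_mul]
  push_cast
  ring

theorem card_coprime_Icc_prod {a b : ℕ} (ha : 0 < a) (hb : 0 < b) :
    #{p ∈ Icc 0 a ×ˢ Icc 0 b | p.1.Coprime p.2} =
      #{p ∈ Ioc 0 a ×ˢ Ioc 0 b | p.1.Coprime p.2} + 2 := by
  have : {p ∈ Icc 0 a ×ˢ Icc 0 b | p.1.Coprime p.2} =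
      insert (0, 1) (insert (1, 0) {p ∈ Ioc 0 a ×ˢ Ioc 0 b | p.1.Coprime p.2}) := by
    ext ⟨x, y⟩
    simp only [mem_filter, mem_product, mem_Icc, mem_Ioc, mem_insert, Prod.mk.injEq]
    rcases Nat.eq_zero_or_pos x with rfl | hx
    · simpa [Nat.coprime_zero_left] using fun h : y = 1 => h ▸ hb
    rcases Nat.eq_zero_or_pos y with rfl | hy
    · simpa [Nat.coprime_zero_right] using fun h : x = 1 => h ▸ ha
    constructor
    · rintro ⟨⟨⟨-, hxa⟩, -, hyb⟩, h⟩
      exact Or.inr (Or.inr ⟨⟨⟨hx, hxa⟩, hy, hyb⟩, h⟩)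
    · rintro (⟨rfl, -⟩ | ⟨-, rfl⟩ | ⟨⟨⟨-, hxa⟩, -, hyb⟩, h⟩)
      · omega
      · omega
      · exact ⟨⟨⟨x.zero_le, hxa⟩, y.zero_le, hyb⟩, h⟩
  rw [this, card_insert_of_notMem (by simp), card_insert_of_notMem (by simp)]

def pairToRat (p : ℕ × ℕ) : ℚ := p.1 / (p.1 + p.2)

theorem num_den_pairToRat {p : ℕ × ℕ} (h : p.1.Coprime p.2) :
    (pairToRat p).num = p.1 ∧ (pairToRat p).den = p.1 + p.2 := by
  obtain ⟨x, y⟩ := p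
  have hpos : (0 : ℤ) < (x + y : ℕ) := by
    have : x + y ≠ 0 := by rintro h0; simp_all [Nat.add_eq_zero_iff]
    omega
  have hcop : Nat.Coprime (x : ℤ).natAbs ((x + y : ℕ) : ℤ).natAbs := by
    rw [Int.natAbs_natCast, Int.natAbs_natCast, add_comm]
    exact Nat.coprime_add_self_right.mpr h
  have hnum := Rat.num_div_eq_of_coprime hpos hcop
  have hden := Rat.den_div_eq_of_coprime hpos hcop
  simp only [pairToRat]
  push_cast at hnum hden ⊢
  exact ⟨hnum, by exact_mod_cast hden⟩

theorem injOn_pairToRat : Set.InjOn pairToRat {p | p.1.Coprime p.2} := by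
  intro p hp p' hp' hpp
  obtain ⟨hnum, hden⟩ := num_den_pairToRat hp
  obtain ⟨hnum', hden'⟩ := num_den_pairToRat hp'
  rw [hpp, hnum'] at hnum
  rw [hpp, hden'] at hden
  exact Prod.ext (by omega) (by omega)

theorem exists_pairToRat_eq {q : ℚ} (h0 : 0 ≤ q) (h1 : q ≤ 1) :
    ∃ p : ℕ × ℕ, p.1.Coprime p.2 ∧ pairToRat p = q := by
  have hnum : (q.num.toNat : ℤ) = q.num := Int.toNat_of_nonneg (Rat.num_nonneg.mpr h0)
  have hle : q.num ≤ q.den := Rat.num_le_denom_iff.mpr h1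
  refine ⟨(q.num.toNat, q.den - q.num.toNat), ?_, ?_⟩
  · rw [Nat.Coprime, Nat.gcd_sub_self_right (by omega), show q.num.toNat = q.num.natAbs by omega]
    exact q.reduced
  · rw [pairToRat, ← Nat.cast_add, Nat.add_sub_cancel' (by omega),
      show ((q.num.toNat : ℕ) : ℚ) = q.num by exact_mod_cast hnum, Rat.num_div_den]

theorem pairToRat_mem_fareyB {m n : ℕ} (hmn : m ≤ n) {p : ℕ × ℕ} (hp : p.1.Coprime p.2) :
    pairToRat p ∈ fareyB n m ↔ p.1 ≤ m ∧ p.2 ≤ n - m := by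
  obtain ⟨hnum, hden⟩ := num_den_pairToRat hp
  have h0 : 0 ≤ pairToRat p := by unfold pairToRat; positivity
  have h1 : pairToRat p ≤ 1 := div_le_one_of_le₀ (by simp) (by positivity)
  simp only [fareyB, farey, Set.mem_ofPred_eq, hnum, hden, h0, h1, true_and]
  omega

theorem fareyB_eq_image {m n : ℕ} (hmn : m ≤ n) :
    fareyB n m =
      pairToRat '' ↑({p ∈ Icc 0 m ×ˢ Icc 0 (n - m) | p.1.Coprime p.2} : Finset (ℕ × ℕ)) := by
  ext q
  simp only [coe_filter, mem_product, mem_Icc, zero_le, true_and, Set.mem_image, Set.mem_ofPred_eq]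
  constructor
  · intro hq
    obtain ⟨p, hp, rfl⟩ := exists_pairToRat_eq hq.1.1 hq.1.2.1
    exact ⟨p, ⟨(pairToRat_mem_fareyB hmn hp).mp hq, hp⟩, rfl⟩
  · rintro ⟨p, ⟨hbox, hp⟩, rfl⟩
    exact (pairToRat_mem_fareyB hmn hp).mpr hbox

theorem ncard_fareyB {m n : ℕ} (hmn : m ≤ n) :
    (fareyB n m).ncard = #{p ∈ Icc 0 m ×ˢ Icc 0 (n - m) | p.1.Coprime p.2} := by
  rw [fareyB_eq_image hmn, Set.InjOn.ncard_image, Set.ncard_coe_finset]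
  exact injOn_pairToRat.mono fun p hp => (mem_filter.mp hp).2

open ArithmeticFunction in
/-- `|F(B(n),m)| = 2 + ∑_{d ≥ 1} μ(d) ⌊m/d⌋ ⌊(n-m)/d⌋` (the summand vanishes
for `d > min(m, n-m)`, so summing over `1 ≤ d ≤ n` captures all terms). -/
theorem stmt18 (m n : ℕ) (hm : 0 < m) (hmn : m < n) :
    ((fareyB n m).ncard : ℤ) =
      2 + ∑ d ∈ Finset.Icc 1 n,
        (moebius d) * ((m / d : ℕ) : ℤ) * (((n - m) / d : ℕ) : ℤ) := by
  rw [ncard_fareyB hmn.le, card_coprime_Icc_prod hm (Nat.sub_pos_of_lt hmn), Nat.cast_add,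
    card_coprime_Ioc_prod hmn.le, Nat.cast_ofNat, add_comm]
end
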